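/- Let Ω ⊆ 𝔽ⁿ. The following are equivalent: (1) I(Ω) is a two-sided ideal of R; (2) if F ∈ I(Ω) and c ∈ 𝔽, then Fc ∈ I(Ω); (3) if a ∈ Ω̄, then a^c ∈ Ω̄ for all c ∈ 𝔽 ∖ {0}; (4) if a ∈ Ω, then a^c ∈ Ω̄ for all c ∈ 𝔽 ∖ {0}. In particular, I(𝔽ⁿ) is a two-sided ideal of R. -/

import Mathlib

/-!
Evaluation at `a` is the remainder modulo the left ideal generated by the `xᵢ - aᵢ`. It is well
defined because that ideal contains no nonzero constant: in `∑ Gᵢ (xᵢ - aᵢ)` the coefficient of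
the longest word `m xⱼ` is `Gⱼ(m)`, since right multiplication by a constant does not raise degrees.

The commutation rule gives `(xᵢ - (a^c)ᵢ) c = ∑ₖ σᵢₖ(c) (xₖ - aₖ)`, hence `(F c)(a) = F(a^c) c`
for `c ≠ 0`. With the product rule `(F G)(a) = (F · G(a))(a)` this shows that `I(Ω)` is
two-sided iff it is stable under right multiplication by constants iff the conjugates of the
points of `Ω` lie in `Ω̄`. Applied to `Ω̄`, which has the same vanishing ideal as `Ω`, this
gives (3).
-/

open Matrix Finsupp

/-- The underlying left `𝔽`-module of the free multivariate skew polynomial ring: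
the free left `𝔽`-module with basis the free monoid on `n` symbols. -/
abbrev SkewPoly (𝔽 : Type*) [DivisionRing 𝔽] (n : ℕ) : Type _ := FreeMonoid (Fin n) →₀ 𝔽

namespace SkewPoly

variable {𝔽 : Type*} [DivisionRing 𝔽] {n : ℕ}

/-- The variable `xᵢ` as a skew polynomial. -/
noncomputable def X (𝔽 : Type*) [DivisionRing 𝔽] {n : ℕ} (i : Fin n) : SkewPoly 𝔽 n :=
  Finsupp.single (FreeMonoid.of i) 1

/-- The constant `a` as a skew polynomial (coefficient on the empty word). -/
noncomputable def C {𝔽 : Type*} [DivisionRing 𝔽] (n : ℕ) (a : 𝔽) :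
    SkewPoly 𝔽 n := Finsupp.single 1 a

/-- The degree of a skew polynomial: the maximal length of a word in its support
(`⊥` for the zero polynomial). -/
noncomputable def deg (F : SkewPoly 𝔽 n) : WithBot ℕ :=
  F.support.sup fun m => ((FreeMonoid.length m : ℕ) : WithBot ℕ)

/-- A matrix morphism `σ : 𝔽 → Mₙ(𝔽)`: a unital ring homomorphism. -/
def IsMatrixMorphism (σ : 𝔽 → Matrix (Fin n) (Fin n) 𝔽) : Prop :=
  σ 1 = 1 ∧ (∀ a b : 𝔽, σ (a + b) = σ a + σ b) ∧ (∀ a b : 𝔽, σ (a * b) = σ a * σ b)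

/-- A `σ`-vector derivation `δ : 𝔽 → 𝔽ⁿ`: additive with `δ(ab) = σ(a)δ(b) + δ(a)b`. -/
def IsVectorDerivation (σ : 𝔽 → Matrix (Fin n) (Fin n) 𝔽) (δ : 𝔽 → Fin n → 𝔽) : Prop :=
  (∀ a b : 𝔽, δ (a + b) = δ a + δ b) ∧
    (∀ a b : 𝔽, δ (a * b) = σ a *ᵥ δ b + fun i => δ a i * b)

/-- A multiplication on the free module `SkewPoly 𝔽 n` making it a ring (with the
existing addition) whose identity is the empty word, which restricts to concatenation
on monomials, is additive on degrees of nonzero elements, and for which left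
multiplication by constants is scalar multiplication. -/
structure RawMul (𝔽 : Type*) [DivisionRing 𝔽] (n : ℕ) where
  /-- the multiplication -/
  mul : SkewPoly 𝔽 n → SkewPoly 𝔽 n → SkewPoly 𝔽 n
  mul_add : ∀ F G H : SkewPoly 𝔽 n, mul F (G + H) = mul F G + mul F H
  add_mul : ∀ F G H : SkewPoly 𝔽 n, mul (F + G) H = mul F H + mul G H
  mul_assoc : ∀ F G H : SkewPoly 𝔽 n, mul (mul F G) H = mul F (mul G H)
  one_mul : ∀ F : SkewPoly 𝔽 n, mul (C n 1) F = F
  mul_one : ∀ F : SkewPoly 𝔽 n, mul F (C n 1) = F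
  mono_mul_mono : ∀ m m' : FreeMonoid (Fin n),
    mul (Finsupp.single m 1) (Finsupp.single m' 1) = Finsupp.single (m * m') 1
  const_mul : ∀ (a : 𝔽) (F : SkewPoly 𝔽 n), mul (C n a) F = a • F
  deg_mul : ∀ F G : SkewPoly 𝔽 n, F ≠ 0 → G ≠ 0 → deg (mul F G) = deg F + deg G

/-- The multiplication `S` satisfies the commutation rule
`xᵢ a = Σⱼ σ_{i,j}(a) xⱼ + δᵢ(a)`. -/
def HasCommRule (S : RawMul 𝔽 n) (σ : 𝔽 → Matrix (Fin n) (Fin n) 𝔽)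
    (δ : 𝔽 → Fin n → 𝔽) : Prop :=
  ∀ (i : Fin n) (a : 𝔽),
    S.mul (X 𝔽 i) (C n a) =
      (∑ j : Fin n, Finsupp.single (FreeMonoid.of j) (σ a i j)) + C n (δ a i)

/-- `F = Σᵢ Gᵢ (xᵢ - aᵢ) + b`, i.e. `b` is a remainder of `F` upon right division
by `x₁ - a₁, …, xₙ - aₙ`; equivalently `F - b` lies in the left ideal generated by
the `xᵢ - aᵢ`. -/
def Decomposes (S : RawMul 𝔽 n) (a : Fin n → 𝔽) (F : SkewPoly 𝔽 n) (b : 𝔽) : Prop :=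
  ∃ G : Fin n → SkewPoly 𝔽 n,
    F = (∑ i : Fin n, S.mul (G i) (X 𝔽 i - C n (a i))) + C n b

/-- The evaluation of `F` at the point `a`: the unique `b ∈ 𝔽` such that `F - b`
lies in the left ideal generated by `x₁ - a₁, …, xₙ - aₙ`. -/
noncomputable def eval (S : RawMul 𝔽 n) (a : Fin n → 𝔽) (F : SkewPoly 𝔽 n) : 𝔽 :=
  letI := Classical.propDecidable (∃ b : 𝔽, Decomposes S a F b)
  if h : ∃ b : 𝔽, Decomposes S a F b then h.choose else 0

/-- The `(σ,δ)`-conjugate `a^c = σ(c) a c⁻¹ + δ(c) c⁻¹` of `a` with respect to `c`. -/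
noncomputable def conj (σ : 𝔽 → Matrix (Fin n) (Fin n) 𝔽) (δ : 𝔽 → Fin n → 𝔽)
    (a : Fin n → 𝔽) (c : 𝔽) : Fin n → 𝔽 :=
  fun i => (σ c *ᵥ a) i * c⁻¹ + δ c i * c⁻¹

/-- `I(Ω)`: the set of skew polynomials vanishing at every point of `Ω`. -/
def zeroIdeal (S : RawMul 𝔽 n) (Ω : Set (Fin n → 𝔽)) : Set (SkewPoly 𝔽 n) :=
  {F | ∀ a ∈ Ω, eval S a F = 0}

/-- The left ideal of `SkewPoly 𝔽 n` generated by `x₁ - a₁, …, xₙ - aₙ`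
(the set of sums of left multiples of the generators). -/
def pointIdeal (S : RawMul 𝔽 n) (a : Fin n → 𝔽) : Set (SkewPoly 𝔽 n) :=
  {F | ∃ G : Fin n → SkewPoly 𝔽 n, F = ∑ i : Fin n, S.mul (G i) (X 𝔽 i - C n (a i))}

/-- The P-closure `Ω̄ = Z(I(Ω))` of a set of points `Ω`. -/
def pClosure (S : RawMul 𝔽 n) (Ω : Set (Fin n → 𝔽)) : Set (Fin n → 𝔽) :=
  {a | ∀ F ∈ zeroIdeal S Ω, eval S a F = 0}

/-- `Ω` is P-closed if it equals its P-closure. -/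
def IsPClosed (S : RawMul 𝔽 n) (Ω : Set (Fin n → 𝔽)) : Prop := pClosure S Ω = Ω

/-- `B` is P-independent: no point of `B` lies in the P-closure of the rest. -/
def PIndep (S : RawMul 𝔽 n) (B : Set (Fin n → 𝔽)) : Prop :=
  ∀ a ∈ B, a ∉ pClosure S (B \ {a})

/-- `B` is a P-basis of `Ω`: a P-independent subset of `Ω` whose P-closure is `Ω`. -/
def IsPBasis (S : RawMul 𝔽 n) (B Ω : Set (Fin n → 𝔽)) : Prop :=
  B ⊆ Ω ∧ PIndep S B ∧ pClosure S B = Ω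

/-- `Ω` is finitely generated: it is the P-closure of a finite subset of itself. -/
def FinGen (S : RawMul 𝔽 n) (Ω : Set (Fin n → 𝔽)) : Prop :=
  ∃ G : Set (Fin n → 𝔽), G.Finite ∧ G ⊆ Ω ∧ pClosure S G = Ω

/-- The rank of a P-closed set: the (common) cardinality of its P-bases. -/
noncomputable def pRank (S : RawMul 𝔽 n) (Ω : Set (Fin n → 𝔽)) : ℕ :=
  sInf {k : ℕ | ∃ B : Finset (Fin n → 𝔽), IsPBasis S ↑B Ω ∧ B.card = k}

/-- The image of the evaluation map `E_Ω : R → 𝔽^Ω`, as a left `𝔽`-subspace of `𝔽^Ω`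
(the span of the image; the image is itself a subspace since evaluation is left linear). -/
noncomputable def evalSpan (S : RawMul 𝔽 n) (Ω : Set (Fin n → 𝔽)) :
    Submodule 𝔽 (↥Ω → 𝔽) :=
  Submodule.span 𝔽 (Set.range fun F : SkewPoly 𝔽 n => fun a : ↥Ω => eval S ↑a F)

/-- `I` is a two-sided ideal with respect to the multiplication `S`. -/
def IsTwoSidedIdealSet (S : RawMul 𝔽 n) (I : Set (SkewPoly 𝔽 n)) : Prop :=
  (0 : SkewPoly 𝔽 n) ∈ I ∧ (∀ F ∈ I, ∀ G ∈ I, F + G ∈ I) ∧ (∀ F ∈ I, -F ∈ I) ∧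
    (∀ F ∈ I, ∀ G : SkewPoly 𝔽 n, S.mul G F ∈ I) ∧
    (∀ F ∈ I, ∀ G : SkewPoly 𝔽 n, S.mul F G ∈ I)


/-- The left row-rank of the skew Vandermonde matrix `V_d(G)`: the dimension of the
left `𝔽`-span of its rows `(N_m(c))_{c ∈ G}`, indexed by the words `m` of length `< d`,
where `N_m(c)` is the evaluation of the monomial `m` at the point `c`. -/
noncomputable def vandermondeRank (S : RawMul 𝔽 n) (G : Finset (Fin n → 𝔽)) (d : ℕ) :
    Cardinal :=
  Module.rank 𝔽 ↥(Submodule.span 𝔽 (Set.range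
    fun m : {m : FreeMonoid (Fin n) // FreeMonoid.length m < d} =>
      fun c : ↥G => eval S ↑c (Finsupp.single (m : FreeMonoid (Fin n)) (1 : 𝔽))))

lemma C_zero : C n (0 : 𝔽) = 0 := Finsupp.single_zero 1

lemma C_add (a b : 𝔽) : C n (a + b) = C n a + C n b := Finsupp.single_add 1 a b

lemma C_sub (a b : 𝔽) : C n (a - b) = C n a - C n b := Finsupp.single_sub 1 a b

lemma C_sum {ι : Type*} (s : Finset ι) (f : ι → 𝔽) : C n (∑ i ∈ s, f i) = ∑ i ∈ s, C n (f i) :=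
  map_sum (Finsupp.singleAddHom (1 : FreeMonoid (Fin n))) f s

lemma smul_C (g a : 𝔽) : g • C n a = C n (g * a) := Finsupp.smul_single' g 1 a

lemma deg_C {a : 𝔽} (ha : a ≠ 0) : deg (C n a) = 0 := by
  rw [deg, C, Finsupp.support_single _ ha, Finset.sup_singleton, FreeMonoid.length_one,
    Nat.cast_zero]

lemma apply_eq_zero_of_deg_lt {F : SkewPoly 𝔽 n} {w : FreeMonoid (Fin n)}
    (h : deg F < w.length) : F w = 0 := by
  by_contra hw
  exact (Finset.le_sup (f := fun m => ((FreeMonoid.length m : ℕ) : WithBot ℕ))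
    (Finsupp.mem_support_iff.mpr hw)).not_gt h

namespace RawMul

variable (S : RawMul 𝔽 n)

noncomputable def mulLeft (F : SkewPoly 𝔽 n) : SkewPoly 𝔽 n →+ SkewPoly 𝔽 n :=
  AddMonoidHom.mk' (S.mul F) (S.mul_add F)

noncomputable def mulRight (G : SkewPoly 𝔽 n) : SkewPoly 𝔽 n →+ SkewPoly 𝔽 n :=
  AddMonoidHom.mk' (S.mul · G) fun F F' => S.add_mul F F' G

lemma mul_zero (F : SkewPoly 𝔽 n) : S.mul F 0 = 0 := (S.mulLeft F).map_zero

lemma zero_mul (G : SkewPoly 𝔽 n) : S.mul 0 G = 0 := (S.mulRight G).map_zero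

lemma mul_sub (F G H : SkewPoly 𝔽 n) : S.mul F (G - H) = S.mul F G - S.mul F H :=
  (S.mulLeft F).map_sub G H

lemma sub_mul (F G H : SkewPoly 𝔽 n) : S.mul (F - G) H = S.mul F H - S.mul G H :=
  (S.mulRight H).map_sub F G

lemma mul_sum {ι : Type*} (s : Finset ι) (F : SkewPoly 𝔽 n) (G : ι → SkewPoly 𝔽 n) :
    S.mul F (∑ i ∈ s, G i) = ∑ i ∈ s, S.mul F (G i) :=
  map_sum (S.mulLeft F) G s

lemma sum_mul {ι : Type*} (s : Finset ι) (F : ι → SkewPoly 𝔽 n) (G : SkewPoly 𝔽 n) :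
    S.mul (∑ i ∈ s, F i) G = ∑ i ∈ s, S.mul (F i) G :=
  map_sum (S.mulRight G) F s

lemma smul_mul (g : 𝔽) (F G : SkewPoly 𝔽 n) : S.mul (g • F) G = g • S.mul F G := by
  rw [← S.const_mul, ← S.const_mul, S.mul_assoc]

lemma C_mul (a : 𝔽) (b : 𝔽) : S.mul (C n a) (C n b) = C n (a * b) := by
  rw [S.const_mul, smul_C]

lemma C_mul_X_sub_C (a b : 𝔽) (i : Fin n) :
    S.mul (C n a) (X 𝔽 i - C n b) = Finsupp.single (FreeMonoid.of i) a - C n (a * b) := by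
  rw [S.const_mul, smul_sub, smul_C, X, Finsupp.smul_single', _root_.mul_one]

lemma mul_X (F : SkewPoly 𝔽 n) (i : Fin n) :
    S.mul F (X 𝔽 i) = Finsupp.mapDomain (· * FreeMonoid.of i) F := by
  induction F using Finsupp.induction with
  | zero => rw [S.zero_mul, Finsupp.mapDomain_zero]
  | single_add m g F _ _ ih =>
    rw [S.add_mul, ih, Finsupp.mapDomain_add, Finsupp.mapDomain_single,
      ← _root_.mul_one g, ← Finsupp.smul_single', S.smul_mul, X, S.mono_mul_mono,
      Finsupp.smul_single', _root_.mul_one]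

lemma sum_mul_X_apply (G : Fin n → SkewPoly 𝔽 n) (m : FreeMonoid (Fin n)) (j : Fin n) :
    (∑ i, S.mul (G i) (X 𝔽 i)) (m * FreeMonoid.of j) = G j m := by
  simp only [S.mul_X, Finsupp.finsetSum_apply]
  rw [Finset.sum_eq_single j, Finsupp.mapDomain_apply (mul_left_injective _)]
  · rintro i - hij
    refine Finsupp.mapDomain_of_notMem_range _ _ fun ⟨m', hm'⟩ => hij ?_
    have hl := congrArg FreeMonoid.toList hm'
    simp only [FreeMonoid.toList_mul, FreeMonoid.toList_of] at hl
    simpa using (List.append_inj' hl rfl).2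
  · simp

lemma mul_C_apply_eq_zero {F : SkewPoly 𝔽 n} (a : 𝔽) {w : FreeMonoid (Fin n)}
    (hF : ∀ m ∈ F.support, m.length < w.length) : S.mul F (C n a) w = 0 := by
  rcases eq_or_ne F 0 with rfl | hF0
  · rw [S.zero_mul, Finsupp.zero_apply]
  rcases eq_or_ne a 0 with rfl | ha
  · rw [C_zero, S.mul_zero, Finsupp.zero_apply]
  refine apply_eq_zero_of_deg_lt ?_
  rw [S.deg_mul F (C n a) hF0 (Finsupp.single_ne_zero.mpr ha), deg_C ha, add_zero, deg,
    Finset.sup_lt_iff (WithBot.bot_lt_coe _)]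
  exact fun m hm => WithBot.coe_lt_coe.mpr (hF m hm)

lemma eq_zero_of_sum_mul_X_sub_C_eq_C {a : Fin n → 𝔽} {G : Fin n → SkewPoly 𝔽 n} {b : 𝔽}
    (h : ∑ i, S.mul (G i) (X 𝔽 i - C n (a i)) = C n b) : b = 0 := by
  by_cases hG : ∀ j, G j = 0
  · simpa [hG, S.zero_mul, C] using h.symm
  push Not at hG
  obtain ⟨j₁, hj₁⟩ := hG
  obtain ⟨m₁, hm₁⟩ := Finsupp.support_nonempty_iff.mpr hj₁
  obtain ⟨⟨j₀, m₀⟩, hp, hmax⟩ := (Finset.univ.sigma fun j => (G j).support).exists_max_image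
    (fun q => q.2.length) ⟨⟨j₁, m₁⟩, Finset.mem_sigma.mpr ⟨Finset.mem_univ _, hm₁⟩⟩
  have hm₀ : G j₀ m₀ ≠ 0 := Finsupp.mem_support_iff.mp (Finset.mem_sigma.mp hp).2
  have hlong : ∀ i, ∀ m ∈ (G i).support, m.length < (m₀ * FreeMonoid.of j₀).length := by
    intro i m hm
    have := hmax ⟨i, m⟩ (Finset.mem_sigma.mpr ⟨Finset.mem_univ _, hm⟩)
    simp only [FreeMonoid.length_mul, FreeMonoid.length_of] at this ⊢
    omega
  have hcoeff := congrArg (· (m₀ * FreeMonoid.of j₀)) h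
  simp only [S.mul_sub, Finset.sum_sub_distrib, Finsupp.sub_apply, S.sum_mul_X_apply,
    Finsupp.finsetSum_apply] at hcoeff
  rw [Finset.sum_eq_zero fun i _ => S.mul_C_apply_eq_zero (a i) (hlong i), sub_zero, C,
    Finsupp.single_eq_of_ne (by simp)] at hcoeff
  exact absurd hcoeff hm₀

end RawMul

variable (S : RawMul 𝔽 n) {σ : 𝔽 → Matrix (Fin n) (Fin n) 𝔽} {δ : 𝔽 → Fin n → 𝔽}

lemma decomposes_C (a : Fin n → 𝔽) (b : 𝔽) : Decomposes S a (C n b) b :=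
  ⟨0, by simp [S.zero_mul]⟩

namespace Decomposes

variable {S} {a : Fin n → 𝔽} {F F' : SkewPoly 𝔽 n} {b b' : 𝔽}

lemma add (h : Decomposes S a F b) (h' : Decomposes S a F' b') :
    Decomposes S a (F + F') (b + b') := by
  obtain ⟨G, rfl⟩ := h
  obtain ⟨G', rfl⟩ := h'
  refine ⟨G + G', ?_⟩
  simp only [Pi.add_apply, S.add_mul, Finset.sum_add_distrib, C_add]
  abel

lemma smul (g : 𝔽) (h : Decomposes S a F b) : Decomposes S a (g • F) (g * b) := by
  obtain ⟨G, rfl⟩ := h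
  refine ⟨fun i => g • G i, ?_⟩
  simp only [smul_add, Finset.smul_sum, S.smul_mul, smul_C]

lemma neg (h : Decomposes S a F b) : Decomposes S a (-F) (-b) := by
  simpa using h.smul (-1)

lemma unique (h : Decomposes S a F b) (h' : Decomposes S a F b') : b = b' := by
  obtain ⟨G, hG⟩ := h
  obtain ⟨G', hG'⟩ := h'
  refine (sub_eq_zero.mp (S.eq_zero_of_sum_mul_X_sub_C_eq_C (a := a) (G := G - G') ?_)).symm
  simp only [Pi.sub_apply, S.sub_mul, Finset.sum_sub_distrib, C_sub]
  rw [sub_eq_sub_iff_add_eq_add, hG.symm.trans hG', add_comm]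

lemma mul_left (h : Decomposes S a F b) {H : SkewPoly 𝔽 n} {r : 𝔽}
    (hr : Decomposes S a (S.mul H (C n b)) r) : Decomposes S a (S.mul H F) r := by
  obtain ⟨G, rfl⟩ := h
  obtain ⟨G', hG'⟩ := hr
  refine ⟨fun i => S.mul H (G i) + G' i, ?_⟩
  simp only [S.mul_add, S.mul_sum, ← S.mul_assoc, hG', S.add_mul, Finset.sum_add_distrib]
  abel

end Decomposes

lemma X_mul_C (hS : HasCommRule S σ δ) (a : Fin n → 𝔽) (i : Fin n) (c : 𝔽) :
    S.mul (X 𝔽 i) (C n c) =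
      ∑ k, S.mul (C n (σ c i k)) (X 𝔽 k - C n (a k)) + C n ((σ c *ᵥ a) i + δ c i) := by
  simp only [hS i c, S.C_mul_X_sub_C, Finset.sum_sub_distrib, C_add, Matrix.mulVec,
    dotProduct, C_sum]
  abel

lemma exists_decomposes (hS : HasCommRule S σ δ) (a : Fin n → 𝔽) (F : SkewPoly 𝔽 n) :
    ∃ b, Decomposes S a F b := by
  have hmonomial (m : FreeMonoid (Fin n)) : ∃ b, Decomposes S a (Finsupp.single m 1) b := by
    induction m using FreeMonoid.inductionOn' with
    | one => exact ⟨1, decomposes_C S a 1⟩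
    | of_mul i m ih =>
      obtain ⟨b, hb⟩ := ih
      rw [← S.mono_mul_mono]
      exact ⟨_, hb.mul_left ⟨_, X_mul_C S hS a i b⟩⟩
  induction F using Finsupp.induction with
  | zero => exact ⟨0, by simpa [C_zero] using decomposes_C S a 0⟩
  | single_add m g F _ _ ih =>
    obtain ⟨b, hb⟩ := ih
    obtain ⟨b', hb'⟩ := hmonomial m
    rw [← _root_.mul_one g, ← Finsupp.smul_single']
    exact ⟨_, (hb'.smul g).add hb⟩

lemma decomposes_eval (hS : HasCommRule S σ δ) (a : Fin n → 𝔽) (F : SkewPoly 𝔽 n) :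
    Decomposes S a F (eval S a F) := by
  have h := exists_decomposes S hS a F
  rw [eval, dif_pos h]
  exact h.choose_spec

lemma eval_eq (hS : HasCommRule S σ δ) {a : Fin n → 𝔽} {F : SkewPoly 𝔽 n} {b : 𝔽}
    (h : Decomposes S a F b) : eval S a F = b :=
  (decomposes_eval S hS a F).unique h

lemma eval_zero (hS : HasCommRule S σ δ) (a : Fin n → 𝔽) : eval S a 0 = 0 :=
  eval_eq S hS (C_zero (𝔽 := 𝔽) (n := n) ▸ decomposes_C S a 0)

lemma eval_add (hS : HasCommRule S σ δ) (a : Fin n → 𝔽) (F G : SkewPoly 𝔽 n) :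
    eval S a (F + G) = eval S a F + eval S a G :=
  eval_eq S hS ((decomposes_eval S hS a F).add (decomposes_eval S hS a G))

lemma eval_neg (hS : HasCommRule S σ δ) (a : Fin n → 𝔽) (F : SkewPoly 𝔽 n) :
    eval S a (-F) = -eval S a F :=
  eval_eq S hS (decomposes_eval S hS a F).neg

lemma eval_mul (hS : HasCommRule S σ δ) (a : Fin n → 𝔽) (F G : SkewPoly 𝔽 n) :
    eval S a (S.mul F G) = eval S a (S.mul F (C n (eval S a G))) :=
  eval_eq S hS ((decomposes_eval S hS a G).mul_left (decomposes_eval S hS a _))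

lemma eval_mul_eq_zero (hS : HasCommRule S σ δ) {a : Fin n → 𝔽} {G : SkewPoly 𝔽 n}
    (hG : eval S a G = 0) (F : SkewPoly 𝔽 n) : eval S a (S.mul F G) = 0 := by
  rw [eval_mul S hS, hG, C_zero, S.mul_zero, eval_zero S hS]

lemma conj_mul_self (a : Fin n → 𝔽) {c : 𝔽} (hc : c ≠ 0) (i : Fin n) :
    conj σ δ a c i * c = (σ c *ᵥ a) i + δ c i := by
  rw [conj, ← add_mul, inv_mul_cancel_right₀ hc]

lemma X_sub_C_conj_mul_C (hS : HasCommRule S σ δ) (a : Fin n → 𝔽) {c : 𝔽} (hc : c ≠ 0)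
    (i : Fin n) :
    S.mul (X 𝔽 i - C n (conj σ δ a c i)) (C n c) =
      ∑ k, S.mul (C n (σ c i k)) (X 𝔽 k - C n (a k)) := by
  rw [S.sub_mul, X_mul_C S hS a, S.C_mul, conj_mul_self a hc, add_sub_cancel_right]

lemma eval_mul_C (hS : HasCommRule S σ δ) (a : Fin n → 𝔽) {c : 𝔽} (hc : c ≠ 0)
    (F : SkewPoly 𝔽 n) : eval S a (S.mul F (C n c)) = eval S (conj σ δ a c) F * c := by
  obtain ⟨G, hG⟩ := decomposes_eval S hS (conj σ δ a c) F
  refine eval_eq S hS ⟨fun k => ∑ j, S.mul (G j) (C n (σ c j k)), ?_⟩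
  conv_lhs => rw [hG]
  simp only [S.add_mul, S.sum_mul, S.mul_assoc, X_sub_C_conj_mul_C S hS a hc, S.mul_sum, S.C_mul]
  rw [Finset.sum_comm]

lemma subset_pClosure (Ω : Set (Fin n → 𝔽)) : Ω ⊆ pClosure S Ω :=
  fun a ha _ hF => hF a ha

lemma zeroIdeal_pClosure (Ω : Set (Fin n → 𝔽)) : zeroIdeal S (pClosure S Ω) = zeroIdeal S Ω :=
  Set.Subset.antisymm (fun _ hF a ha => hF a (subset_pClosure S Ω ha)) fun F hF _ ha => ha F hF

lemma pClosure_pClosure (Ω : Set (Fin n → 𝔽)) : pClosure S (pClosure S Ω) = pClosure S Ω := by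
  rw [pClosure, zeroIdeal_pClosure]
  rfl

lemma forall_mul_C_mem_zeroIdeal_iff (hS : HasCommRule S σ δ) (Ω : Set (Fin n → 𝔽)) :
    (∀ F ∈ zeroIdeal S Ω, ∀ c : 𝔽, S.mul F (C n c) ∈ zeroIdeal S Ω) ↔
      ∀ a ∈ Ω, ∀ c : 𝔽, c ≠ 0 → conj σ δ a c ∈ pClosure S Ω := by
  constructor
  · intro h a ha c hc F hF
    have hFc : eval S a (S.mul F (C n c)) = 0 := h F hF c a ha
    rw [eval_mul_C S hS a hc] at hFc
    exact (mul_eq_zero.mp hFc).resolve_right hc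
  · intro h F hF c a ha
    rcases eq_or_ne c 0 with rfl | hc
    · rw [C_zero, S.mul_zero]
      exact eval_zero S hS a
    · show eval S a (S.mul F (C n c)) = 0
      rw [eval_mul_C S hS a hc, h a ha c hc F hF, zero_mul]

lemma isTwoSidedIdealSet_zeroIdeal_iff (hS : HasCommRule S σ δ) (Ω : Set (Fin n → 𝔽)) :
    IsTwoSidedIdealSet S (zeroIdeal S Ω) ↔
      ∀ F ∈ zeroIdeal S Ω, ∀ c : 𝔽, S.mul F (C n c) ∈ zeroIdeal S Ω := by
  refine ⟨fun h F hF c => h.2.2.2.2 F hF (C n c), fun h => ⟨?_, ?_, ?_, ?_, ?_⟩⟩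
  · exact fun a _ => eval_zero S hS a
  · intro F hF G hG a ha
    show eval S a (F + G) = 0
    rw [eval_add S hS, hF a ha, hG a ha, add_zero]
  · intro F hF a ha
    show eval S a (-F) = 0
    rw [eval_neg S hS, hF a ha, neg_zero]
  · exact fun F hF G a ha => eval_mul_eq_zero S hS (hF a ha) G
  · intro F hF G a ha
    show eval S a (S.mul F G) = 0
    rw [eval_mul S hS]
    exact h F hF _ a ha

end SkewPoly

open SkewPoly

theorem stmt6_general {𝔽 : Type*} [DivisionRing 𝔽] {n : ℕ}
    (σ : 𝔽 → Matrix (Fin n) (Fin n) 𝔽) (δ : 𝔽 → Fin n → 𝔽)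
    (S : RawMul 𝔽 n) (hS : HasCommRule S σ δ)
    (Ω : Set (Fin n → 𝔽)) :
    [IsTwoSidedIdealSet S (zeroIdeal S Ω),
      ∀ F ∈ zeroIdeal S Ω, ∀ c : 𝔽, S.mul F (C n c) ∈ zeroIdeal S Ω,
      ∀ a ∈ pClosure S Ω, ∀ c : 𝔽, c ≠ 0 → conj σ δ a c ∈ pClosure S Ω,
      ∀ a ∈ Ω, ∀ c : 𝔽, c ≠ 0 → conj σ δ a c ∈ pClosure S Ω].TFAE ∧
    IsTwoSidedIdealSet S (zeroIdeal S (Set.univ : Set (Fin n → 𝔽))) := by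
  refine ⟨?_, (isTwoSidedIdealSet_zeroIdeal_iff S hS _).mpr <|
    (forall_mul_C_mem_zeroIdeal_iff S hS _).mpr fun a _ c _ => subset_pClosure S _ trivial⟩
  tfae_have 1 ↔ 2 := isTwoSidedIdealSet_zeroIdeal_iff S hS Ω
  tfae_have 2 ↔ 4 := forall_mul_C_mem_zeroIdeal_iff S hS Ω
  tfae_have 2 ↔ 3 := by
    simpa only [zeroIdeal_pClosure, pClosure_pClosure] using
      forall_mul_C_mem_zeroIdeal_iff S hS (pClosure S Ω)
  tfae_finish

/-- TFAE: (1) `I(Ω)` is a two-sided ideal; (2) `I(Ω)` is closed under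
right multiplication by constants; (3) the P-closure of `Ω` is closed under conjugation;
(4) conjugates of points of `Ω` lie in the P-closure. In particular `I(𝔽ⁿ)` is two-sided. -/
theorem stmt6 {𝔽 : Type*} [DivisionRing 𝔽] {n : ℕ} (hn : 0 < n)
    (σ : 𝔽 → Matrix (Fin n) (Fin n) 𝔽) (δ : 𝔽 → Fin n → 𝔽)
    (hσ : IsMatrixMorphism σ) (hδ : IsVectorDerivation σ δ)
    (S : RawMul 𝔽 n) (hS : HasCommRule S σ δ)
    (Ω : Set (Fin n → 𝔽)) :
    [IsTwoSidedIdealSet S (zeroIdeal S Ω),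
      ∀ F ∈ zeroIdeal S Ω, ∀ c : 𝔽, S.mul F (C n c) ∈ zeroIdeal S Ω,
      ∀ a ∈ pClosure S Ω, ∀ c : 𝔽, c ≠ 0 → conj σ δ a c ∈ pClosure S Ω,
      ∀ a ∈ Ω, ∀ c : 𝔽, c ≠ 0 → conj σ δ a c ∈ pClosure S Ω].TFAE ∧
    IsTwoSidedIdealSet S (zeroIdeal S (Set.univ : Set (Fin n → 𝔽))) :=
  stmt6_general σ δ S hS Ω
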